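/- Non-negativity of the synergy term: I(Z;X,Y) − I(Z;X) − I(Z;Y) + I_pr(X↘Y;Z) ≥ 0; consequently, the synergistic partial information I(Z;X,Y) − I(Z;X) − I(Z;Y) + I_red(Z;X,Y) ≥ 0. -/

import Mathlib

open scoped BigOperators

/-- `p` is a probability mass function on a finite type. -/
def IsPMF {α : Type*} [Fintype α] (p : α → ℝ) : Prop :=
  (∀ a, 0 ≤ p a) ∧ ∑ a, p a = 1

/-- Kullback–Leibler divergence `D(u‖v) = Σ u log (u/v)` (with the convention `0 log 0 = 0`),
`⊤` if absolute continuity fails, i.e. if `u a > 0 = v a` for some `a`. -/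
noncomputable def klDiv {α : Type*} [Fintype α] (u v : α → ℝ) : EReal :=
  if ∀ a, 0 < u a → 0 < v a then ((∑ a, u a * Real.log (u a / v a) : ℝ) : EReal) else ⊤

variable {𝓧 𝓨 𝓩 : Type*} [Fintype 𝓧] [Fintype 𝓨] [Fintype 𝓩]

/-- Marginal distribution of the first variable `X`. -/
noncomputable def margX (p : 𝓧 × 𝓨 × 𝓩 → ℝ) (x : 𝓧) : ℝ := ∑ y, ∑ z, p (x, y, z)

/-- Marginal distribution of the second variable `Y`. -/
noncomputable def margY (p : 𝓧 × 𝓨 × 𝓩 → ℝ) (y : 𝓨) : ℝ := ∑ x, ∑ z, p (x, y, z)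

/-- Marginal distribution of the third variable `Z`. -/
noncomputable def margZ (p : 𝓧 × 𝓨 × 𝓩 → ℝ) (z : 𝓩) : ℝ := ∑ x, ∑ y, p (x, y, z)

/-- Joint marginal `p(x,z)`. -/
noncomputable def margXZ (p : 𝓧 × 𝓨 × 𝓩 → ℝ) (x : 𝓧) (z : 𝓩) : ℝ := ∑ y, p (x, y, z)

/-- Joint marginal `p(y,z)`. -/
noncomputable def margYZ (p : 𝓧 × 𝓨 × 𝓩 → ℝ) (y : 𝓨) (z : 𝓩) : ℝ := ∑ x, p (x, y, z)

/-- Joint marginal `p(x,y)`. -/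
noncomputable def margXY (p : 𝓧 × 𝓨 × 𝓩 → ℝ) (x : 𝓧) (y : 𝓨) : ℝ := ∑ z, p (x, y, z)

/-- Conditional distribution `p(·|x)` of `Z` given `X = x`. -/
noncomputable def condX (p : 𝓧 × 𝓨 × 𝓩 → ℝ) (x : 𝓧) : 𝓩 → ℝ :=
  fun z => margXZ p x z / margX p x

/-- Conditional distribution `p(·|y)` of `Z` given `Y = y`. -/
noncomputable def condY (p : 𝓧 × 𝓨 × 𝓩 → ℝ) (y : 𝓨) : 𝓩 → ℝ :=
  fun z => margYZ p y z / margY p y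

/-- Conditional distribution `p(·|x,y)` of `Z` given `(X,Y) = (x,y)`. -/
noncomputable def condXY (p : 𝓧 × 𝓨 × 𝓩 → ℝ) (x : 𝓧) (y : 𝓨) : 𝓩 → ℝ :=
  fun z => p (x, y, z) / margXY p x y

/-- `C_X`: the convex hull of the conditionals `{p(·|x) : p(x) > 0}`. -/
noncomputable def CXhull (p : 𝓧 × 𝓨 × 𝓩 → ℝ) : Set (𝓩 → ℝ) :=
  convexHull ℝ {q | ∃ x, 0 < margX p x ∧ q = condX p x}

/-- `C_Y`: the convex hull of the conditionals `{p(·|y) : p(y) > 0}`. -/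
noncomputable def CYhull (p : 𝓧 × 𝓨 × 𝓩 → ℝ) : Set (𝓩 → ℝ) :=
  convexHull ℝ {q | ∃ y, 0 < margY p y ∧ q = condY p y}

/-- Mutual information `I(Z;X)` (terms with `p(x,z) = 0` vanish). -/
noncomputable def miZX (p : 𝓧 × 𝓨 × 𝓩 → ℝ) : ℝ :=
  ∑ x, ∑ z, margXZ p x z * Real.log (margXZ p x z / (margX p x * margZ p z))

/-- Mutual information `I(Z;Y)`. -/
noncomputable def miZY (p : 𝓧 × 𝓨 × 𝓩 → ℝ) : ℝ :=
  ∑ y, ∑ z, margYZ p y z * Real.log (margYZ p y z / (margY p y * margZ p z))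

/-- Mutual information `I(Z;X,Y)` between `Z` and the joint variable `(X,Y)`. -/
noncomputable def miZXY (p : 𝓧 × 𝓨 × 𝓩 → ℝ) : ℝ :=
  ∑ x, ∑ y, ∑ z, p (x, y, z) * Real.log (p (x, y, z) / (margXY p x y * margZ p z))

/-- Projected information `I_pr(X ↘ Y; Z) =
`Σ_{x : p(x)>0} p(x)·[D(p(·|x)‖p_Z) − inf_{q ∈ C_Y} D(p(·|x)‖q)]`. -/
noncomputable def IprXY (p : 𝓧 × 𝓨 × 𝓩 → ℝ) : ℝ :=
  ∑ x, if 0 < margX p x then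
      margX p x * ((klDiv (condX p x) (margZ p)).toReal -
        (⨅ q ∈ CYhull p, klDiv (condX p x) q).toReal)
    else 0

/-- Projected information `I_pr(Y ↘ X; Z)`. -/
noncomputable def IprYX (p : 𝓧 × 𝓨 × 𝓩 → ℝ) : ℝ :=
  ∑ y, if 0 < margY p y then
      margY p y * ((klDiv (condY p y) (margZ p)).toReal -
        (⨅ q ∈ CXhull p, klDiv (condY p y) q).toReal)
    else 0

/-- Redundant information `I_red(Z;X,Y) = min {I_pr(X↘Y;Z), I_pr(Y↘X;Z)}`. -/
noncomputable def Ired (p : 𝓧 × 𝓨 × 𝓩 → ℝ) : ℝ := min (IprXY p) (IprYX p)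


/-!
Since `I(Z;X) = Σ_x p(x) D(p(·|x) ‖ p_Z)`, the first inequality says
`Σ_x p(x) inf_{q ∈ C_Y} D(p(·|x) ‖ q) ≤ I(Z;X,Y) − I(Z;Y) = I(Z;X|Y)`.
Bound each infimum by its value at `q_x = Σ_y p(y|x) p(·|y) ∈ C_Y`: for each `z`, the log-sum
inequality over `y` bounds `p(x) D(p(·|x) ‖ q_x)` by the `x`-slice of `I(Z;X|Y)`.
Exchanging `X` and `Y` gives the same bound for `I_pr(Y↘X;Z)`, hence for their minimum `I_red`.
-/

open Real Finset

theorem log_sum_inequality {ι : Type*} (s : Finset ι) {a b : ι → ℝ}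
    (ha : ∀ i ∈ s, 0 ≤ a i) (hb : ∀ i ∈ s, 0 ≤ b i) (hab : ∀ i ∈ s, b i = 0 → a i = 0) :
    (∑ i ∈ s, a i) * log ((∑ i ∈ s, a i) / ∑ i ∈ s, b i) ≤ ∑ i ∈ s, a i * log (a i / b i) := by
  rcases (sum_nonneg hb).eq_or_lt with hB | hB
  · have ha₀ : ∀ i ∈ s, a i = 0 := fun i hi ↦
      hab i hi ((sum_eq_zero_iff_of_nonneg hb).1 hB.symm i hi)
    rw [sum_eq_zero ha₀, zero_mul]
    exact sum_nonneg fun i hi ↦ by simp [ha₀ i hi]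
  set B := ∑ i ∈ s, b i
  have hweight : ∀ i ∈ s, b i / B * (a i / b i) = a i / B := fun i hi ↦ by
    rcases (hb i hi).eq_or_lt with h | h
    · simp [hab i hi h.symm, ← h]
    · field_simp
  have hjensen := convexOn_mul_log.map_sum_le (t := s) (w := fun i ↦ b i / B)
    (p := fun i ↦ a i / b i) (fun i hi ↦ div_nonneg (hb i hi) hB.le)
    (by rw [← sum_div, div_self hB.ne']) (fun i hi ↦ div_nonneg (ha i hi) (hb i hi))
  have hrhs : ∑ i ∈ s, b i / B * (a i / b i) * log (a i / b i) =
      (∑ i ∈ s, a i * log (a i / b i)) / B := by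
    rw [sum_div]
    exact sum_congr rfl fun i hi ↦ by rw [hweight i hi, div_mul_eq_mul_div]
  simp only [smul_eq_mul, ← mul_assoc, sum_congr rfl hweight, ← sum_div] at hjensen
  rw [hrhs, div_mul_eq_mul_div] at hjensen
  exact (div_le_div_iff_of_pos_right hB).1 hjensen

theorem klDiv_nonneg {α : Type*} [Fintype α] {u v : α → ℝ} (hu : u ∈ stdSimplex ℝ α)
    (hv : v ∈ stdSimplex ℝ α) : 0 ≤ klDiv u v := by
  unfold klDiv
  split_ifs with hac
  · have := log_sum_inequality univ (fun a _ ↦ hu.1 a) (fun a _ ↦ hv.1 a)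
      fun a _ hva ↦ by_contra fun hua ↦ (hac a ((hu.1 a).lt_of_ne' hua)).ne' hva
    rw [hu.2, hv.2] at this
    simpa using this
  · exact le_top

section

-- Shadows the global type variables so that each lemma carries only the `Fintype` instances it uses.
variable {𝓧 𝓨 𝓩 : Type*} {p : 𝓧 × 𝓨 × 𝓩 → ℝ}

lemma margXY_nonneg [Fintype 𝓩] (hp : ∀ a, 0 ≤ p a) (x : 𝓧) (y : 𝓨) : 0 ≤ margXY p x y :=
  sum_nonneg fun _ _ ↦ hp _

lemma margYZ_nonneg [Fintype 𝓧] (hp : ∀ a, 0 ≤ p a) (y : 𝓨) (z : 𝓩) : 0 ≤ margYZ p y z :=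
  sum_nonneg fun _ _ ↦ hp _

lemma margXZ_nonneg [Fintype 𝓨] (hp : ∀ a, 0 ≤ p a) (x : 𝓧) (z : 𝓩) : 0 ≤ margXZ p x z :=
  sum_nonneg fun _ _ ↦ hp _

lemma margX_nonneg [Fintype 𝓨] [Fintype 𝓩] (hp : ∀ a, 0 ≤ p a) (x : 𝓧) : 0 ≤ margX p x :=
  sum_nonneg fun y _ ↦ margXY_nonneg hp x y

lemma margY_nonneg [Fintype 𝓧] [Fintype 𝓩] (hp : ∀ a, 0 ≤ p a) (y : 𝓨) : 0 ≤ margY p y :=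
  sum_nonneg fun x _ ↦ margXY_nonneg hp x y

lemma le_margXY [Fintype 𝓩] (hp : ∀ a, 0 ≤ p a) (x : 𝓧) (y : 𝓨) (z : 𝓩) :
    p (x, y, z) ≤ margXY p x y :=
  single_le_sum (fun z _ ↦ hp (x, y, z)) (mem_univ z)

lemma le_margYZ [Fintype 𝓧] (hp : ∀ a, 0 ≤ p a) (x : 𝓧) (y : 𝓨) (z : 𝓩) :
    p (x, y, z) ≤ margYZ p y z :=
  single_le_sum (fun x _ ↦ hp (x, y, z)) (mem_univ x)

lemma le_margXZ [Fintype 𝓨] (hp : ∀ a, 0 ≤ p a) (x : 𝓧) (y : 𝓨) (z : 𝓩) :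
    p (x, y, z) ≤ margXZ p x z :=
  single_le_sum (fun y _ ↦ hp (x, y, z)) (mem_univ y)

lemma margXY_le_margX [Fintype 𝓨] [Fintype 𝓩] (hp : ∀ a, 0 ≤ p a) (x : 𝓧) (y : 𝓨) :
    margXY p x y ≤ margX p x :=
  single_le_sum (fun y _ ↦ margXY_nonneg hp x y) (mem_univ y)

lemma margXY_le_margY [Fintype 𝓧] [Fintype 𝓩] (hp : ∀ a, 0 ≤ p a) (x : 𝓧) (y : 𝓨) :
    margXY p x y ≤ margY p y :=
  single_le_sum (fun x _ ↦ margXY_nonneg hp x y) (mem_univ x)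

lemma margXZ_le_margZ [Fintype 𝓧] [Fintype 𝓨] (hp : ∀ a, 0 ≤ p a) (x : 𝓧) (z : 𝓩) :
    margXZ p x z ≤ margZ p z :=
  single_le_sum (fun x _ ↦ margXZ_nonneg hp x z) (mem_univ x)

lemma sum_margXZ [Fintype 𝓨] [Fintype 𝓩] (x : 𝓧) : ∑ z, margXZ p x z = margX p x :=
  sum_comm

lemma sum_margYZ [Fintype 𝓧] [Fintype 𝓩] (y : 𝓨) : ∑ z, margYZ p y z = margY p y := by
  simp only [margYZ, margY]
  rw [sum_comm]

lemma eq_zero_of_margX_eq_zero [Fintype 𝓨] [Fintype 𝓩] (hp : ∀ a, 0 ≤ p a) {x : 𝓧}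
    (hx : margX p x = 0) (y : 𝓨) (z : 𝓩) : p (x, y, z) = 0 :=
  le_antisymm (hx ▸ (le_margXY hp x y z).trans (margXY_le_margX hp x y)) (hp _)

lemma condX_mem_stdSimplex [Fintype 𝓨] [Fintype 𝓩] (hp : ∀ a, 0 ≤ p a) {x : 𝓧}
    (hx : 0 < margX p x) : condX p x ∈ stdSimplex ℝ 𝓩 :=
  ⟨fun z ↦ div_nonneg (margXZ_nonneg hp x z) hx.le, by
    simp only [condX, ← sum_div, sum_margXZ, div_self hx.ne']⟩

lemma condY_mem_stdSimplex [Fintype 𝓧] [Fintype 𝓩] (hp : ∀ a, 0 ≤ p a) {y : 𝓨}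
    (hy : 0 < margY p y) : condY p y ∈ stdSimplex ℝ 𝓩 :=
  ⟨fun z ↦ div_nonneg (margYZ_nonneg hp y z) hy.le, by
    simp only [condY, ← sum_div, sum_margYZ, div_self hy.ne']⟩

lemma CYhull_subset_stdSimplex [Fintype 𝓧] [Fintype 𝓩] (hp : ∀ a, 0 ≤ p a) :
    CYhull p ⊆ stdSimplex ℝ 𝓩 :=
  convexHull_min (by rintro _ ⟨y, hy, rfl⟩; exact condY_mem_stdSimplex hp hy)
    (convex_stdSimplex ℝ 𝓩)

lemma miZX_eq_sum_klDiv [Fintype 𝓧] [Fintype 𝓨] [Fintype 𝓩] (hp : ∀ a, 0 ≤ p a) :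
    miZX p = ∑ x, if 0 < margX p x then
      margX p x * (klDiv (condX p x) (margZ p)).toReal else 0 := by
  refine sum_congr rfl fun x _ ↦ ?_
  split_ifs with hx
  · have hac : ∀ z, 0 < condX p x z → 0 < margZ p z := fun z hz ↦
      ((div_pos_iff_of_pos_right hx).1 hz).trans_le (margXZ_le_margZ hp x z)
    rw [klDiv, if_pos hac, EReal.toReal_coe, mul_sum]
    refine sum_congr rfl fun z _ ↦ ?_
    rw [condX, ← mul_assoc, mul_div_cancel₀ _ hx.ne', div_div]
  · have hx₀ : margX p x = 0 := le_antisymm (not_lt.1 hx) (margX_nonneg hp x)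
    exact sum_eq_zero fun z _ ↦ by
      rw [margXZ, sum_eq_zero fun y _ ↦ eq_zero_of_margX_eq_zero hp hx₀ y z, zero_mul]

lemma IprXY_eq_miZX_sub [Fintype 𝓧] [Fintype 𝓨] [Fintype 𝓩] (hp : ∀ a, 0 ≤ p a) :
    IprXY p = miZX p - ∑ x, if 0 < margX p x then
      margX p x * (⨅ q ∈ CYhull p, klDiv (condX p x) q).toReal else 0 := by
  rw [miZX_eq_sum_klDiv hp, IprXY, ← sum_sub_distrib]
  refine sum_congr rfl fun x _ ↦ ?_
  split_ifs <;> ring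

/-- The conditional mutual information `I(Z;X|Y)`. -/
noncomputable def miZXgivenY [Fintype 𝓧] [Fintype 𝓨] [Fintype 𝓩] (p : 𝓧 × 𝓨 × 𝓩 → ℝ) : ℝ :=
  ∑ x, ∑ y, ∑ z, p (x, y, z) * log (p (x, y, z) * margY p y / (margXY p x y * margYZ p y z))

lemma miZXY_sub_miZY [Fintype 𝓧] [Fintype 𝓨] [Fintype 𝓩] (hp : ∀ a, 0 ≤ p a) :
    miZXY p - miZY p = miZXgivenY p := by
  have hmiZY : miZY p = ∑ x, ∑ y, ∑ z,
      p (x, y, z) * log (margYZ p y z / (margY p y * margZ p z)) := by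
    calc miZY p = ∑ y, ∑ z, ∑ x, p (x, y, z) * log (margYZ p y z / (margY p y * margZ p z)) :=
          sum_congr rfl fun y _ ↦ sum_congr rfl fun z _ ↦ sum_mul _ _ _
      _ = ∑ y, ∑ x, ∑ z, p (x, y, z) * log (margYZ p y z / (margY p y * margZ p z)) :=
          sum_congr rfl fun y _ ↦ sum_comm
      _ = _ := sum_comm
  rw [miZXY, hmiZY, miZXgivenY]
  simp only [← sum_sub_distrib]
  refine sum_congr rfl fun x _ ↦ sum_congr rfl fun y _ ↦ sum_congr rfl fun z _ ↦ ?_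
  rcases (hp (x, y, z)).eq_or_lt with h₀ | hpos
  · simp [← h₀]
  have hXY := hpos.trans_le (le_margXY hp x y z)
  have hYZ := hpos.trans_le (le_margYZ hp x y z)
  have hY := hXY.trans_le (margXY_le_margY hp x y)
  have hZ := (hpos.trans_le (le_margXZ hp x y z)).trans_le (margXZ_le_margZ hp x z)
  rw [← mul_sub, ← log_div (by positivity) (by positivity)]
  congr 2
  field_simp

noncomputable def condXViaY [Fintype 𝓧] [Fintype 𝓨] [Fintype 𝓩] (p : 𝓧 × 𝓨 × 𝓩 → ℝ)
    (x : 𝓧) : 𝓩 → ℝ :=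
  fun z ↦ ∑ y, margXY p x y / margX p x * condY p y z

lemma margX_mul_condXViaY [Fintype 𝓧] [Fintype 𝓨] [Fintype 𝓩] {x : 𝓧} (hx : margX p x ≠ 0)
    (z : 𝓩) :
    margX p x * condXViaY p x z = ∑ y, margXY p x y * margYZ p y z / margY p y := by
  rw [condXViaY, mul_sum]
  refine sum_congr rfl fun y _ ↦ ?_
  rw [← mul_assoc, mul_div_cancel₀ _ hx, condY, mul_div_assoc]

lemma margXY_mul_margYZ_div_margY_pos [Fintype 𝓧] [Fintype 𝓩] (hp : ∀ a, 0 ≤ p a) {x : 𝓧}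
    {y : 𝓨} {z : 𝓩} (h : 0 < p (x, y, z)) : 0 < margXY p x y * margYZ p y z / margY p y := by
  have hXY := h.trans_le (le_margXY hp x y z)
  have hYZ := h.trans_le (le_margYZ hp x y z)
  have hY := hXY.trans_le (margXY_le_margY hp x y)
  positivity

lemma condXViaY_pos [Fintype 𝓧] [Fintype 𝓨] [Fintype 𝓩] (hp : ∀ a, 0 ≤ p a) {x : 𝓧}
    (hx : 0 < margX p x) {z : 𝓩} (hz : 0 < condX p x z) : 0 < condXViaY p x z := by
  obtain ⟨y, -, hy⟩ := (sum_pos_iff_of_nonneg fun y _ ↦ hp (x, y, z)).1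
    ((div_pos_iff_of_pos_right hx).1 hz)
  have hmul : 0 < margX p x * condXViaY p x z := by
    rw [margX_mul_condXViaY hx.ne']
    exact sum_pos' (fun y _ ↦ div_nonneg (mul_nonneg (margXY_nonneg hp x y)
      (margYZ_nonneg hp y z)) (margY_nonneg hp y))
      ⟨y, mem_univ y, margXY_mul_margYZ_div_margY_pos hp hy⟩
  exact pos_of_mul_pos_right hmul hx.le

lemma condXViaY_mem_CYhull [Fintype 𝓧] [Fintype 𝓨] [Fintype 𝓩] (hp : ∀ a, 0 ≤ p a) {x : 𝓧}
    (hx : 0 < margX p x) : condXViaY p x ∈ CYhull p := by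
  classical
  have hsupp : ∀ y, margXY p x y / margX p x ≠ 0 → 0 < margY p y := fun y hy ↦
    ((margXY_nonneg hp x y).lt_of_ne' (div_ne_zero_iff.1 hy).1).trans_le
      (margXY_le_margY hp x y)
  have hmix : condXViaY p x = ∑ y with 0 < margY p y, (margXY p x y / margX p x) • condY p y := by
    rw [sum_filter_of_ne fun y _ h ↦ hsupp y (smul_ne_zero_iff.1 h).1]
    ext z
    simp [condXViaY, Finset.sum_apply]
  rw [hmix]
  refine (convex_convexHull ℝ _).sum_mem (fun y _ ↦ div_nonneg (margXY_nonneg hp x y) hx.le)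
    ?_ fun y hy ↦ subset_convexHull ℝ _ ⟨y, (mem_filter.1 hy).2, rfl⟩
  rw [sum_filter_of_ne fun y _ h ↦ hsupp y h, ← sum_div]
  exact div_self hx.ne'

lemma toReal_iInf_klDiv_le [Fintype 𝓧] [Fintype 𝓨] [Fintype 𝓩] (hp : ∀ a, 0 ≤ p a) {x : 𝓧}
    (hx : 0 < margX p x) :
    (⨅ q ∈ CYhull p, klDiv (condX p x) q).toReal ≤
      ∑ z, condX p x z * log (condX p x z / condXViaY p x z) := by
  have hnonneg : 0 ≤ ⨅ q ∈ CYhull p, klDiv (condX p x) q := le_iInf₂ fun q hq ↦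
    klDiv_nonneg (condX_mem_stdSimplex hp hx) (CYhull_subset_stdSimplex hp hq)
  have hle := iInf₂_le (f := fun q _ ↦ klDiv (condX p x) q) _ (condXViaY_mem_CYhull hp hx)
  rw [klDiv, if_pos fun z ↦ condXViaY_pos hp hx] at hle
  simpa using EReal.toReal_le_toReal hle (ne_bot_of_le_ne_bot EReal.zero_ne_bot hnonneg)
    (EReal.coe_ne_top _)

lemma margXZ_mul_log_le [Fintype 𝓧] [Fintype 𝓨] [Fintype 𝓩] (hp : ∀ a, 0 ≤ p a) {x : 𝓧}
    (hx : margX p x ≠ 0) (z : 𝓩) :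
    margXZ p x z * log (margXZ p x z / (margX p x * condXViaY p x z)) ≤
      ∑ y, p (x, y, z) * log (p (x, y, z) * margY p y / (margXY p x y * margYZ p y z)) := by
  have hlogsum := log_sum_inequality univ (fun y _ ↦ hp (x, y, z)) (fun y _ ↦ div_nonneg
    (mul_nonneg (margXY_nonneg hp x y) (margYZ_nonneg hp y z)) (margY_nonneg hp y))
    fun y _ hb ↦ by_contra fun h ↦
      (margXY_mul_margYZ_div_margY_pos hp ((hp _).lt_of_ne' h)).ne' hb
  rw [margX_mul_condXViaY hx]
  simp only [div_div_eq_mul_div] at hlogsum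
  exact hlogsum

lemma margX_mul_toReal_iInf_klDiv_le [Fintype 𝓧] [Fintype 𝓨] [Fintype 𝓩] (hp : ∀ a, 0 ≤ p a)
    {x : 𝓧} (hx : 0 < margX p x) :
    margX p x * (⨅ q ∈ CYhull p, klDiv (condX p x) q).toReal ≤
      ∑ y, ∑ z, p (x, y, z) * log (p (x, y, z) * margY p y / (margXY p x y * margYZ p y z)) :=
  calc margX p x * (⨅ q ∈ CYhull p, klDiv (condX p x) q).toReal
      ≤ margX p x * ∑ z, condX p x z * log (condX p x z / condXViaY p x z) :=
        mul_le_mul_of_nonneg_left (toReal_iInf_klDiv_le hp hx) hx.le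
    _ = ∑ z, margXZ p x z * log (margXZ p x z / (margX p x * condXViaY p x z)) := by
        rw [mul_sum]
        refine sum_congr rfl fun z _ ↦ ?_
        rw [condX, ← mul_assoc, mul_div_cancel₀ _ hx.ne', div_div]
    _ ≤ ∑ z, ∑ y, p (x, y, z) *
          log (p (x, y, z) * margY p y / (margXY p x y * margYZ p y z)) :=
        sum_le_sum fun z _ ↦ margXZ_mul_log_le hp hx.ne' z
    _ = _ := sum_comm

theorem synergyXY_nonneg [Fintype 𝓧] [Fintype 𝓨] [Fintype 𝓩] (hp : ∀ a, 0 ≤ p a) :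
    0 ≤ miZXY p - miZX p - miZY p + IprXY p := by
  have hbound : (∑ x, if 0 < margX p x then
      margX p x * (⨅ q ∈ CYhull p, klDiv (condX p x) q).toReal else 0) ≤ miZXgivenY p := by
    refine sum_le_sum fun x _ ↦ ?_
    split_ifs with hx
    · exact margX_mul_toReal_iInf_klDiv_le hp hx
    · have hx₀ : margX p x = 0 := le_antisymm (not_lt.1 hx) (margX_nonneg hp x)
      simp [eq_zero_of_margX_eq_zero hp hx₀]
  linarith [IprXY_eq_miZX_sub hp, miZXY_sub_miZY hp]

def swapXY (p : 𝓧 × 𝓨 × 𝓩 → ℝ) : 𝓨 × 𝓧 × 𝓩 → ℝ := fun a ↦ p (a.2.1, a.1, a.2.2)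

lemma margZ_swapXY [Fintype 𝓧] [Fintype 𝓨] : margZ (swapXY p) = margZ p :=
  funext fun _ ↦ sum_comm

lemma miZX_swapXY [Fintype 𝓧] [Fintype 𝓨] [Fintype 𝓩] : miZX (swapXY p) = miZY p := by
  rw [miZX, margZ_swapXY]; rfl

lemma miZY_swapXY [Fintype 𝓧] [Fintype 𝓨] [Fintype 𝓩] : miZY (swapXY p) = miZX p := by
  rw [miZY, margZ_swapXY]; rfl

lemma miZXY_swapXY [Fintype 𝓧] [Fintype 𝓨] [Fintype 𝓩] : miZXY (swapXY p) = miZXY p := by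
  rw [miZXY, margZ_swapXY]; exact sum_comm

lemma IprXY_swapXY [Fintype 𝓧] [Fintype 𝓨] [Fintype 𝓩] : IprXY (swapXY p) = IprYX p := by
  rw [IprXY, margZ_swapXY]; rfl

theorem synergyYX_nonneg [Fintype 𝓧] [Fintype 𝓨] [Fintype 𝓩] (hp : ∀ a, 0 ≤ p a) :
    0 ≤ miZXY p - miZX p - miZY p + IprYX p := by
  have h := synergyXY_nonneg (p := swapXY p) fun _ ↦ hp _
  rw [miZX_swapXY, miZY_swapXY, miZXY_swapXY, IprXY_swapXY] at h
  linarith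

end

theorem synergy_nonneg_general
    (p : 𝓧 × 𝓨 × 𝓩 → ℝ) (hp : IsPMF p) :
    0 ≤ miZXY p - miZX p - miZY p + IprXY p ∧
      0 ≤ miZXY p - miZX p - miZY p + Ired p := by
  refine ⟨synergyXY_nonneg hp.1, ?_⟩
  rw [Ired, min_def]
  split_ifs
  exacts [synergyXY_nonneg hp.1, synergyYX_nonneg hp.1]

/-- Non-negativity of the synergy term:
`I(Z;X,Y) − I(Z;X) − I(Z;Y) + I_pr(X↘Y;Z) ≥ 0`; consequently, the synergistic partial
information `I(Z;X,Y) − I(Z;X) − I(Z;Y) + I_red(Z;X,Y) ≥ 0`. -/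
theorem synergy_nonneg
    [Nonempty 𝓧] [Nonempty 𝓨] [Nonempty 𝓩]
    (p : 𝓧 × 𝓨 × 𝓩 → ℝ) (hp : IsPMF p) :
    0 ≤ miZXY p - miZX p - miZY p + IprXY p ∧
      0 ≤ miZXY p - miZX p - miZY p + Ired p :=
  synergy_nonneg_general p hp
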